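/- Let W denote an irreducible T-module. Then A, A*, A^ε each map W into itself, and the ordered triple of operators on W obtained by restricting A, A*, A^ε to W is a Leonard triple on W. -/

import Mathlib

noncomputable section

open Matrix Finset

/-- Vertex set of the hypercube `Q_D`: binary strings of length `D`. -/
abbrev Vtx (D : ℕ) := Fin D → Bool

/-- Hamming weight of a vertex, i.e. its distance to the fixed vertex `x = (0,...,0)`. -/
def wt {D : ℕ} (y : Vtx D) : ℕ := (Finset.univ.filter fun k => y k = true).card

/-- The adjacency matrix of the hypercube `Q_D`: `A_{yz} = 1` iff `y,z` differ in exactly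
one coordinate. -/
def adjMat (D : ℕ) : Matrix (Vtx D) (Vtx D) ℂ :=
  fun y z => if (Finset.univ.filter fun k => y k ≠ z k).card = 1 then 1 else 0

/-- The dual adjacency matrix of `Q_D` with respect to `x = (0,...,0)`: the diagonal
matrix with `(y,y)`-entry `D - 2·wt(y)`. -/
def dualAdjMat (D : ℕ) : Matrix (Vtx D) (Vtx D) ℂ :=
  Matrix.diagonal fun y => (D : ℂ) - 2 * (wt y : ℂ)

/-- The imaginary adjacency matrix `Aᵉ = -i(AA* - A*A)/2`. -/
def imagAdjMat (D : ℕ) : Matrix (Vtx D) (Vtx D) ℂ :=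
  (-Complex.I / 2) • (adjMat D * dualAdjMat D - dualAdjMat D * adjMat D)

/-- The 2×2 matrix `P₁` with entries `(P₁)₀₀ = 1`, `(P₁)₀₁ = 1`, `(P₁)₁₀ = -i`,
`(P₁)₁₁ = i`. -/
def P1 : Bool → Bool → ℂ
  | false, false => 1
  | false, true  => 1
  | true,  false => -Complex.I
  | true,  true  => Complex.I

/-- The D-fold Kronecker power `P = P₁^{⊗D}`, i.e. `P_{yz} = ∏_k (P₁)_{y_k z_k}`. -/
def Pmat (D : ℕ) : Matrix (Vtx D) (Vtx D) ℂ :=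
  fun y z => ∏ k : Fin D, P1 (y k) (z k)

/-- The eigenvalues `θ_j = D - 2j`. -/
def theta (D j : ℕ) : ℂ := (D : ℂ) - 2 * (j : ℂ)

/-- The `i`-th primitive idempotent `E_i = ∏_{0 ≤ j ≤ D, j ≠ i} (A - θ_j I)/(θ_i - θ_j)`. -/
def Emat (D i : ℕ) : Matrix (Vtx D) (Vtx D) ℂ :=
  Polynomial.aeval (adjMat D)
    (∏ j ∈ (Finset.range (D + 1)).erase i,
      Polynomial.C ((theta D i - theta D j)⁻¹) * (Polynomial.X - Polynomial.C (theta D j)))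

/-- The `i`-th dual idempotent `E*_i`: diagonal with `(y,y)`-entry `1` if `wt(y) = i`. -/
def EstarMat (D i : ℕ) : Matrix (Vtx D) (Vtx D) ℂ :=
  Matrix.diagonal fun y => if wt y = i then 1 else 0

/-- The `i`-th imaginary idempotent `Eᵉ_i = P⁻¹ E_i P`. -/
def EepsMat (D i : ℕ) : Matrix (Vtx D) (Vtx D) ℂ :=
  (Pmat D)⁻¹ * Emat D i * Pmat D

/-- `W` is a `T`-module: a subspace of `ℂ^X` invariant under `A` and `A*`. -/
def IsTMod (D : ℕ) (W : Submodule ℂ (Vtx D → ℂ)) : Prop :=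
  (∀ w ∈ W, (adjMat D).mulVec w ∈ W) ∧ (∀ w ∈ W, (dualAdjMat D).mulVec w ∈ W)

/-- `W` is an irreducible `T`-module. -/
def IsIrredTMod (D : ℕ) (W : Submodule ℂ (Vtx D → ℂ)) : Prop :=
  IsTMod D W ∧ W ≠ ⊥ ∧
    ∀ U : Submodule ℂ (Vtx D → ℂ), IsTMod D U → U ≤ W → U = ⊥ ∨ U = W

/-- The Hermitian inner product `⟨u,v⟩ = uᵗ · conj v` (linear in the first argument). -/
def inp {D : ℕ} (u v : Vtx D → ℂ) : ℂ := ∑ y, u y * (starRingEnd ℂ) (v y)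

/-- A square matrix is irreducible tridiagonal: every nonzero entry lies on the diagonal,
subdiagonal or superdiagonal, and every subdiagonal and superdiagonal entry is nonzero. -/
def IsIrredTridiagonal {n : ℕ} (B : Matrix (Fin n) (Fin n) ℂ) : Prop :=
  (∀ i j : Fin n, ((i : ℕ) + 1 < (j : ℕ) ∨ (j : ℕ) + 1 < (i : ℕ)) → B i j = 0) ∧
  (∀ i j : Fin n, ((i : ℕ) + 1 = (j : ℕ) ∨ (j : ℕ) + 1 = (i : ℕ)) → B i j ≠ 0)

/-- `(Y₁, Y₂, Y₃)` is a Leonard triple on `V`: for each of the three operators there is a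
basis of `V` with respect to which the matrix representing that operator is diagonal and
the matrices representing the other two are irreducible tridiagonal. -/
def IsLeonardTriple {V : Type*} [AddCommGroup V] [Module ℂ V]
    (Y₁ Y₂ Y₃ : V →ₗ[ℂ] V) : Prop :=
  (∃ (n : ℕ) (b : Module.Basis (Fin n) ℂ V),
    (LinearMap.toMatrix b b Y₁).IsDiag ∧
    IsIrredTridiagonal (LinearMap.toMatrix b b Y₂) ∧
    IsIrredTridiagonal (LinearMap.toMatrix b b Y₃)) ∧
  (∃ (n : ℕ) (b : Module.Basis (Fin n) ℂ V),
    (LinearMap.toMatrix b b Y₂).IsDiag ∧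
    IsIrredTridiagonal (LinearMap.toMatrix b b Y₃) ∧
    IsIrredTridiagonal (LinearMap.toMatrix b b Y₁)) ∧
  (∃ (n : ℕ) (b : Module.Basis (Fin n) ℂ V),
    (LinearMap.toMatrix b b Y₃).IsDiag ∧
    IsIrredTridiagonal (LinearMap.toMatrix b b Y₁) ∧
    IsIrredTridiagonal (LinearMap.toMatrix b b Y₂))


/-! The matrices `A`, `A*`, `Aᵉ` satisfy the commutation relations of the Pauli matrices,
`[A, A*] = 2i Aᵉ`, `[A*, Aᵉ] = 2i A`, `[Aᵉ, A] = 2i A*`: writing `A = ∑ₖ Xₖ` and `A* = ∑ₖ Zₖ`,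
where `Xₖ` flips the `k`-th bit and `Zₖ` is the sign of the `k`-th bit, the pairs `(Xₖ, Zₖ)` are
Pauli pairs and operators at different coordinates commute.

For a cyclic rotation `(X, Y, Z)` of the triple, `X`, `e = (Y + iZ)/2`, `f = (Y - iZ)/2` form an
`sl₂`-triple. On an irreducible module the vectors `fᵏ m`, for a primitive vector `m`, are an
eigenbasis of `X` in which `e` lives on the superdiagonal and `f` on the subdiagonal, both without
zeros; hence `Y = e + f` and `Z = i(f - e)` are irreducible tridiagonal. -/

open Module Complex

def JointlyIrreducible {K V : Type*} [Field K] [AddCommGroup V] [Module K V]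
    (X Y : Module.End K V) : Prop :=
  ∀ U : Submodule K V, U ∈ X.invtSubmodule → U ∈ Y.invtSubmodule → U = ⊥ ∨ U = ⊤

lemma finrank_eq_one_of_jointlyIrreducible_zero {K V : Type*} [Field K] [AddCommGroup V]
    [Module K V] [Nontrivial V] (hirr : JointlyIrreducible (0 : Module.End K V) 0) :
    finrank K V = 1 := by
  obtain ⟨v, hv⟩ := exists_ne (0 : V)
  have hspan : K ∙ v = ⊤ := (hirr _ (by simp) (by simp)).resolve_left (by simpa using hv)
  rw [← finrank_top, ← hspan, finrank_span_singleton hv]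

lemma jointlyIrreducible_restrict {K V : Type*} [Field K] [AddCommGroup V] [Module K V]
    {X Y : Module.End K V} {W : Submodule K V} (hX : W ∈ X.invtSubmodule)
    (hY : W ∈ Y.invtSubmodule)
    (hirr : ∀ U ≤ W, U ∈ X.invtSubmodule → U ∈ Y.invtSubmodule → U = ⊥ ∨ U = W) :
    JointlyIrreducible (X.restrict hX) (Y.restrict hY) := by
  intro U hUX hUY
  have hinj := Submodule.map_injective_of_injective W.injective_subtype
  refine (hirr _ (Submodule.map_subtype_le W U)
    (Module.End.invtSubmodule.map_subtype_mem_of_mem_invtSubmodule X hX hUX)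
    (Module.End.invtSubmodule.map_subtype_mem_of_mem_invtSubmodule Y hY hUY)).imp
    (fun h => hinj (h.trans (Submodule.map_bot _).symm))
    (fun h => hinj (h.trans (Submodule.map_subtype_top W).symm))

lemma LinearMap.toMatrix_ne_zero_iff_of_apply_eq_smul {K V ι : Type*} [Field K] [AddCommGroup V]
    [Module K V] [Fintype ι] [DecidableEq ι] (b : Basis ι K V) {g : Module.End K V} {j k : ι}
    {c : K} (hc : c ≠ 0) (hg : g (b j) = c • b k) (i : ι) :
    LinearMap.toMatrix b b g i j ≠ 0 ↔ i = k := by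
  simp [LinearMap.toMatrix_apply, hg, Finsupp.single_apply, hc, eq_comm]

lemma isIrredTridiagonal_smul_add_smul {n : ℕ} {E F : Matrix (Fin n) (Fin n) ℂ} {α β : ℂ}
    (hα : α ≠ 0) (hβ : β ≠ 0) (hE : ∀ i j, E i j ≠ 0 ↔ (i : ℕ) + 1 = j)
    (hF : ∀ i j, F i j ≠ 0 ↔ (j : ℕ) + 1 = i) : IsIrredTridiagonal (α • E + β • F) := by
  have hE' : ∀ i j : Fin n, (i : ℕ) + 1 ≠ j → E i j = 0 := fun i j h =>
    not_ne_iff.mp (mt (hE i j).mp h)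
  have hF' : ∀ i j : Fin n, (j : ℕ) + 1 ≠ i → F i j = 0 := fun i j h =>
    not_ne_iff.mp (mt (hF i j).mp h)
  refine ⟨fun i j hij => ?_, fun i j hij => ?_⟩
  · simp [hE' i j (by omega), hF' i j (by omega)]
  · rcases hij with hij | hij
    · simp [hF' i j (by omega), hα, (hE i j).mpr hij]
    · simp [hE' i j (by omega), hβ, (hF i j).mpr hij]

lemma isIrredTridiagonal_of_fin_one (B : Matrix (Fin 1) (Fin 1) ℂ) : IsIrredTridiagonal B :=
  ⟨fun i j => by omega, fun i j => by omega⟩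

section

attribute [local instance] LieRing.ofAssociativeRing

variable {K V : Type*} [Field K] [AddCommGroup V] [Module K V]

namespace IsSl2Triple.HasPrimitiveVectorWith

variable {h e f : Module.End K V} {t : IsSl2Triple h e f} {m : V} {n : ℕ}
  (P : t.HasPrimitiveVectorWith m (n : K))
include P

lemma apply_h_pow (k : ℕ) : h ((f ^ k) m) = ((n : K) - 2 * k) • (f ^ k) m := by
  simpa using P.lie_h_pow_toEnd_f k

lemma apply_e_pow_succ (k : ℕ) :
    e ((f ^ (k + 1)) m) = ((k + 1) * ((n : K) - k)) • (f ^ k) m := by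
  simpa using P.lie_e_pow_succ_toEnd_f k

lemma apply_e : e m = 0 := by
  simpa using P.lie_e

variable [CharZero K]

lemma pow_apply_ne_zero {k : ℕ} (hk : k ≤ n) : (f ^ k) m ≠ 0 := by
  simpa using P.pow_toEnd_f_ne_zero_of_eq_nat rfl hk

lemma linearIndependent_pow_apply :
    LinearIndependent K fun j : Fin (n + 1) => (f ^ (j : ℕ)) m :=
  h.eigenvectors_linearIndependent' (fun j : Fin (n + 1) => (n : K) - 2 * (j : ℕ))
    (fun i j hij => Fin.ext (by simpa using hij))
    _ fun j => ⟨Module.End.mem_eigenspace_iff.mpr (P.apply_h_pow j),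
      P.pow_apply_ne_zero (Nat.lt_succ_iff.mp j.is_lt)⟩

variable [FiniteDimensional K V]

lemma pow_succ_apply_eq_zero : (f ^ (n + 1)) m = 0 := by
  simpa using P.pow_toEnd_f_eq_zero_of_eq_nat rfl

lemma span_pow_apply_eq_top (hirr : JointlyIrreducible e f) :
    Submodule.span K (Set.range fun j : Fin (n + 1) => (f ^ (j : ℕ)) m) = ⊤ := by
  set U := Submodule.span K (Set.range fun j : Fin (n + 1) => (f ^ (j : ℕ)) m)
  have mem : ∀ k ≤ n, (f ^ k) m ∈ U := fun k hk =>
    Submodule.subset_span ⟨⟨k, Nat.lt_succ_of_le hk⟩, rfl⟩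
  refine (hirr U ?_ ?_).resolve_left fun hU => P.pow_apply_ne_zero (Nat.zero_le n) ?_
  · refine Submodule.span_le.mpr (Set.range_subset_iff.mpr fun ⟨j, hj⟩ => ?_)
    rcases j with _ | k
    · simp [P.apply_e]
    · show e ((f ^ (k + 1)) m) ∈ U
      exact (P.apply_e_pow_succ k).symm ▸ U.smul_mem _ (mem k (by omega))
  · refine Submodule.span_le.mpr (Set.range_subset_iff.mpr fun ⟨j, hj⟩ => ?_)
    show f ((f ^ j) m) ∈ U
    rw [← Module.End.mul_apply, ← pow_succ']
    rcases Nat.lt_or_ge j n with hjn | hjn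
    · exact mem (j + 1) hjn
    · rw [show j = n by omega, P.pow_succ_apply_eq_zero]; exact U.zero_mem
  · simpa [hU] using mem 0 (Nat.zero_le n)

variable (hirr : JointlyIrreducible e f)

def basisPow : Basis (Fin (n + 1)) K V :=
  Basis.mk P.linearIndependent_pow_apply (P.span_pow_apply_eq_top hirr).ge

lemma basisPow_apply (j : Fin (n + 1)) : P.basisPow hirr j = (f ^ (j : ℕ)) m :=
  Basis.mk_apply _ _ _

lemma isDiag_toMatrix_basisPow_h :
    (LinearMap.toMatrix (P.basisPow hirr) (P.basisPow hirr) h).IsDiag := by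
  intro i j hij
  rw [LinearMap.toMatrix_apply, basisPow_apply, P.apply_h_pow, ← basisPow_apply P hirr]
  simp [hij]

lemma toMatrix_basisPow_e_ne_zero_iff (i j : Fin (n + 1)) :
    LinearMap.toMatrix (P.basisPow hirr) (P.basisPow hirr) e i j ≠ 0 ↔ (i : ℕ) + 1 = j := by
  obtain ⟨_ | k, hk⟩ := j
  · simp [LinearMap.toMatrix_apply, basisPow_apply, P.apply_e]
  · have hc : ((k : K) + 1) * ((n : K) - k) ≠ 0 := by
      rw [← Nat.cast_succ, ← Nat.cast_sub (by omega)]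
      exact_mod_cast Nat.mul_ne_zero (Nat.succ_ne_zero k) (by omega)
    rw [LinearMap.toMatrix_ne_zero_iff_of_apply_eq_smul _ hc (k := ⟨k, by omega⟩)]
    · simp [Fin.ext_iff]
    · simp only [basisPow_apply, P.apply_e_pow_succ]

lemma toMatrix_basisPow_f_ne_zero_iff (i j : Fin (n + 1)) :
    LinearMap.toMatrix (P.basisPow hirr) (P.basisPow hirr) f i j ≠ 0 ↔ (j : ℕ) + 1 = i := by
  obtain ⟨j, hj⟩ := j
  rcases Nat.lt_or_ge j n with hjn | hjn
  · rw [LinearMap.toMatrix_ne_zero_iff_of_apply_eq_smul _ one_ne_zero (k := ⟨j + 1, by omega⟩)]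
    · simp [Fin.ext_iff, eq_comm]
    · simp only [basisPow_apply, one_smul, ← Module.End.mul_apply, ← pow_succ']
  · obtain rfl : j = n := by omega
    simp [LinearMap.toMatrix_apply, basisPow_apply, ← Module.End.mul_apply, ← pow_succ',
      P.pow_succ_apply_eq_zero]
    omega

end IsSl2Triple.HasPrimitiveVectorWith

theorem IsSl2Triple.exists_basis_toMatrix [CharZero K] [IsAlgClosed K] [FiniteDimensional K V]
    [Nontrivial V] {h e f : Module.End K V} (t : IsSl2Triple h e f)
    (hirr : JointlyIrreducible e f) :
    ∃ (n : ℕ) (b : Basis (Fin n) K V), (LinearMap.toMatrix b b h).IsDiag ∧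
      (∀ i j, LinearMap.toMatrix b b e i j ≠ 0 ↔ (i : ℕ) + 1 = j) ∧
      (∀ i j, LinearMap.toMatrix b b f i j ≠ 0 ↔ (j : ℕ) + 1 = i) := by
  obtain ⟨μ, m, -, P⟩ := t.exists_hasPrimitiveVectorWith (R := K) (M := V)
  obtain ⟨n, rfl⟩ := P.exists_nat
  exact ⟨n + 1, P.basisPow hirr, P.isDiag_toMatrix_basisPow_h hirr,
    P.toMatrix_basisPow_e_ne_zero_iff hirr, P.toMatrix_basisPow_f_ne_zero_iff hirr⟩

structure IsPauliTriple {R : Type*} [Ring R] [Algebra ℂ R] (X Y Z : R) : Prop where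
  commutator_fst_snd : X * Y - Y * X = (2 * I) • Z
  commutator_snd_thd : Y * Z - Z * Y = (2 * I) • X
  commutator_thd_fst : Z * X - X * Z = (2 * I) • Y

namespace IsPauliTriple

section Ring

variable {R : Type*} [Ring R] [Algebra ℂ R] {X Y Z : R}

lemma rotate (hP : IsPauliTriple X Y Z) : IsPauliTriple Y Z X :=
  ⟨hP.2, hP.3, hP.1⟩

lemma map {S : Type*} [Ring S] [Algebra ℂ S] (hP : IsPauliTriple X Y Z) (φ : R →ₐ[ℂ] S) :
    IsPauliTriple (φ X) (φ Y) (φ Z) := by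
  refine ⟨?_, ?_, ?_⟩ <;> simp only [← map_mul, ← map_sub, ← map_smul]
  exacts [congrArg φ hP.1, congrArg φ hP.2, congrArg φ hP.3]

lemma isSl2Triple (hP : IsPauliTriple X Y Z) (hX : X ≠ 0) :
    IsSl2Triple X ((1 / 2 : ℂ) • (Y + I • Z)) ((1 / 2 : ℂ) • (Y - I • Z)) where
  h_ne_zero := hX
  lie_e_f := by
    simp only [LieRing.of_associative_ring_bracket, mul_add, add_mul, mul_sub, sub_mul,
      smul_mul_assoc, mul_smul_comm]
    linear_combination (norm := match_scalars <;> ring_nf <;> simp) (-I / 2 : ℂ) • hP.2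
  lie_h_e_nsmul := by
    simp only [LieRing.of_associative_ring_bracket, mul_add, add_mul, smul_mul_assoc,
      mul_smul_comm]
    linear_combination (norm := match_scalars <;> ring_nf <;> simp)
      (1 / 2 : ℂ) • hP.1 - (I / 2 : ℂ) • hP.3
  lie_h_f_nsmul := by
    simp only [LieRing.of_associative_ring_bracket, mul_sub, sub_mul, smul_mul_assoc,
      mul_smul_comm]
    linear_combination (norm := match_scalars <;> ring_nf <;> simp)
      (1 / 2 : ℂ) • hP.1 + (I / 2 : ℂ) • hP.3

lemma eq_zero_of_fst_eq_zero (hP : IsPauliTriple X Y Z) (hX : X = 0) : Y = 0 ∧ Z = 0 := by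
  have hY : (2 * I) • Y = 0 := by simpa [hX] using hP.3.symm
  have hZ : (2 * I) • Z = 0 := by simpa [hX] using hP.1.symm
  exact ⟨(smul_eq_zero.mp hY).resolve_left (by simp),
    (smul_eq_zero.mp hZ).resolve_left (by simp)⟩

end Ring

section Module

variable {V : Type*} [AddCommGroup V] [Module ℂ V] {X Y Z : Module.End ℂ V}

lemma restrict (hP : IsPauliTriple X Y Z) {U : Submodule ℂ V} (hX : U ∈ X.invtSubmodule)
    (hY : U ∈ Y.invtSubmodule) (hZ : U ∈ Z.invtSubmodule) :
    IsPauliTriple (X.restrict hX) (Y.restrict hY) (Z.restrict hZ) := by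
  refine ⟨?_, ?_, ?_⟩ <;> ext x
  exacts [congr($(hP.1) x), congr($(hP.2) x), congr($(hP.3) x)]

lemma mem_invtSubmodule (hP : IsPauliTriple X Y Z) {U : Submodule ℂ V}
    (hX : U ∈ X.invtSubmodule) (hY : U ∈ Y.invtSubmodule) : U ∈ Z.invtSubmodule := by
  intro x hx
  have hZ : Z x = (2 * I)⁻¹ • (X (Y x) - Y (X x)) := by
    rw [← Module.End.mul_apply, ← Module.End.mul_apply, ← LinearMap.sub_apply, hP.1,
      LinearMap.smul_apply, smul_smul, inv_mul_cancel₀ (by simp), one_smul]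
  rw [Submodule.mem_comap, hZ]
  exact U.smul_mem _ (U.sub_mem (hX (hY hx)) (hY (hX hx)))

lemma jointlyIrreducible_snd_thd (hP : IsPauliTriple X Y Z) (hirr : JointlyIrreducible X Y) :
    JointlyIrreducible Y Z :=
  fun U hY hZ => hirr U (hP.rotate.mem_invtSubmodule hY hZ) hY

variable [FiniteDimensional ℂ V] [Nontrivial V]

theorem exists_basis_isDiag_isIrredTridiagonal (hP : IsPauliTriple X Y Z)
    (hirr : JointlyIrreducible Y Z) :
    ∃ (n : ℕ) (b : Basis (Fin n) ℂ V), (LinearMap.toMatrix b b X).IsDiag ∧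
      IsIrredTridiagonal (LinearMap.toMatrix b b Y) ∧
      IsIrredTridiagonal (LinearMap.toMatrix b b Z) := by
  -- `IsSl2Triple` needs `X ≠ 0`; if `X = 0`, all three vanish and `V` is a line.
  by_cases hX : X = 0
  · obtain ⟨rfl, rfl⟩ := hP.eq_zero_of_fst_eq_zero hX
    refine ⟨1, finBasisOfFinrankEq ℂ V (finrank_eq_one_of_jointlyIrreducible_zero hirr), ?_,
      isIrredTridiagonal_of_fin_one _, isIrredTridiagonal_of_fin_one _⟩
    simp [hX, Matrix.isDiag_zero]
  set E : Module.End ℂ V := (1 / 2 : ℂ) • (Y + I • Z)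
  set F : Module.End ℂ V := (1 / 2 : ℂ) • (Y - I • Z)
  have t : IsSl2Triple X E F := hP.isSl2Triple hX
  have hY : Y = (1 : ℂ) • E + (1 : ℂ) • F := by simp only [E, F]; module
  have hZ : Z = (-I) • E + I • F := by
    simp only [E, F]; match_scalars <;> ring_nf <;> simp
  clear_value E F
  have hirrEF : JointlyIrreducible E F := by
    intro U hE hF
    have hEF : ∀ α β : ℂ, U ∈ (α • E + β • F).invtSubmodule := fun α β =>
      Module.End.invtSubmodule_inf_invtSubmodule_le_invtSubmodule_add _ _
        ⟨Module.End.invtSubmodule_le_invtSubmodule_smul _ _ hE,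
          Module.End.invtSubmodule_le_invtSubmodule_smul _ _ hF⟩
    exact hirr U (hY ▸ hEF _ _) (hZ ▸ hEF _ _)
  obtain ⟨n, b, hdiag, hEb, hFb⟩ := t.exists_basis_toMatrix hirrEF
  refine ⟨n, b, hdiag, ?_, ?_⟩
  · rw [hY, map_add, map_smul, map_smul]
    exact isIrredTridiagonal_smul_add_smul one_ne_zero one_ne_zero hEb hFb
  · rw [hZ, map_add, map_smul, map_smul]
    exact isIrredTridiagonal_smul_add_smul (neg_ne_zero.mpr I_ne_zero) I_ne_zero hEb hFb

theorem isLeonardTriple (hP : IsPauliTriple X Y Z) (hirr : JointlyIrreducible X Y) :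
    IsLeonardTriple X Y Z :=
  have hirr' := hP.jointlyIrreducible_snd_thd hirr
  ⟨hP.exists_basis_isDiag_isIrredTridiagonal hirr',
    hP.rotate.exists_basis_isDiag_isIrredTridiagonal (hP.rotate.jointlyIrreducible_snd_thd hirr'),
    hP.rotate.rotate.exists_basis_isDiag_isIrredTridiagonal hirr⟩

end Module

end IsPauliTriple

end

lemma Finset.sum_mul_sum_sub_sum_mul_sum_of_commute {ι R : Type*} [Fintype ι] [Ring R]
    (a b : ι → R) (h : ∀ j k, j ≠ k → Commute (a j) (b k)) :
    (∑ j, a j) * (∑ k, b k) - (∑ k, b k) * (∑ j, a j) = ∑ k, (a k * b k - b k * a k) := by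
  rw [Finset.sum_mul_sum, Finset.sum_mul_sum, Finset.sum_comm (f := fun k j => b k * a j),
    ← Finset.sum_sub_distrib]
  refine Finset.sum_congr rfl fun j _ => ?_
  rw [← Finset.sum_sub_distrib]
  exact Finset.sum_eq_single j (fun k _ hkj => sub_eq_zero.mpr (h j k hkj.symm).eq) (by simp)

theorem isPauliTriple_sum {ι R : Type*} [Fintype ι] [Ring R] [Algebra ℂ R] (x z : ι → R)
    (hx : ∀ k, x k * x k = 1) (hz : ∀ k, z k * z k = 1) (hanti : ∀ k, x k * z k = -(z k * x k))
    (hxx : ∀ j k, Commute (x j) (x k)) (hzz : ∀ j k, Commute (z j) (z k))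
    (hxz : ∀ j k, j ≠ k → Commute (x j) (z k)) :
    IsPauliTriple (∑ k, x k) (∑ k, z k)
      ((-I / 2) • ((∑ k, x k) * (∑ k, z k) - (∑ k, z k) * (∑ k, x k))) := by
  have hzx : ∀ k, z k * x k = -(x k * z k) := fun k => by rw [hanti, neg_neg]
  have hXZ : (∑ k, x k) * (∑ k, z k) - (∑ k, z k) * (∑ k, x k) = (2 : ℂ) • ∑ k, x k * z k := by
    rw [Finset.sum_mul_sum_sub_sum_mul_sum_of_commute _ _ hxz, Finset.smul_sum]
    exact Finset.sum_congr rfl fun k _ => by rw [hzx, sub_neg_eq_add, two_smul]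
  have hI : 2 * I * (-I / 2) = 1 := by ring_nf; rw [I_sq]; ring
  refine ⟨by rw [smul_smul, hI, one_smul], ?_, ?_⟩
  · rw [hXZ, smul_smul, mul_smul_comm, smul_mul_assoc, ← smul_sub,
      Finset.sum_mul_sum_sub_sum_mul_sum_of_commute _ _
        fun j k hjk => (hxz k j hjk.symm).symm.mul_right (hzz j k)]
    have : ∀ k, z k * (x k * z k) - x k * z k * z k = (-2 : ℂ) • x k := fun k => by
      rw [← mul_assoc, hzx, neg_mul, mul_assoc, hz, mul_one]; module
    simp only [this, ← Finset.smul_sum, smul_smul]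
    congr 1; ring
  · rw [hXZ, smul_smul, mul_smul_comm, smul_mul_assoc, ← smul_sub,
      Finset.sum_mul_sum_sub_sum_mul_sum_of_commute _ _
        fun j k hjk => (hxx j k).mul_left (hxz k j hjk.symm).symm]
    have : ∀ k, x k * z k * x k - x k * (x k * z k) = (-2 : ℂ) • z k := fun k => by
      rw [mul_assoc, hzx, mul_neg, ← mul_assoc, hx, one_mul]; module
    simp only [this, ← Finset.smul_sum, smul_smul]
    congr 1; ring

lemma Matrix.permMatrix_mul_diagonal {n R : Type*} [DecidableEq n] [Fintype n]
    [NonAssocSemiring R] (σ : Equiv.Perm n) (d : n → R) :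
    σ.permMatrix R * diagonal d = diagonal (d ∘ σ) * σ.permMatrix R := by
  ext i j
  by_cases h : σ i = j <;> simp [PEquiv.toMatrix_apply, h]

namespace Hypercube

variable {D : ℕ}

def flipAt (k : Fin D) : Equiv.Perm (Vtx D) :=
  Function.Involutive.toPerm (fun y => Function.update y k (!y k)) fun y => by simp

lemma flipAt_apply (k : Fin D) (y : Vtx D) (j : Fin D) :
    flipAt k y j = if j = k then !y k else y j :=
  Function.update_apply y k (!y k) j

lemma flipAt_mul_self (k : Fin D) : flipAt k * flipAt k = 1 := by
  ext y i
  by_cases hi : i = k <;> simp [flipAt_apply, hi]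

lemma flipAt_mul_comm (j k : Fin D) : flipAt j * flipAt k = flipAt k * flipAt j := by
  ext y i
  simp only [Equiv.Perm.mul_apply, flipAt_apply]
  by_cases hj : i = j <;> by_cases hk : i = k <;> simp_all

lemma flipAt_eq_iff (k : Fin D) (y z : Vtx D) :
    flipAt k y = z ↔ (univ.filter fun j => y j ≠ z j) = {k} := by
  simp only [funext_iff, Finset.ext_iff, flipAt_apply, Finset.mem_filter, Finset.mem_univ,
    true_and, Finset.mem_singleton]
  refine forall_congr' fun j => ?_
  by_cases hj : j = k
  · subst hj; cases y j <;> cases z j <;> simp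
  · simp [hj]

def flipMat (k : Fin D) : Matrix (Vtx D) (Vtx D) ℂ := (flipAt k).permMatrix ℂ

def signMat (k : Fin D) : Matrix (Vtx D) (Vtx D) ℂ := diagonal fun y => if y k then -1 else 1

lemma adjMat_eq_sum_flipMat : adjMat D = ∑ k, flipMat k := by
  ext y z
  simp only [adjMat, Matrix.sum_apply, flipMat, PEquiv.toMatrix_apply, Equiv.toPEquiv_apply,
    Option.mem_def, Option.some.injEq, flipAt_eq_iff]
  by_cases h : ∃ k, (univ.filter fun j => y j ≠ z j) = {k}
  · obtain ⟨k, hk⟩ := h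
    simp [hk, Finset.sum_ite_eq]
  · simp only [not_exists] at h
    rw [if_neg (fun h1 => by obtain ⟨k, hk⟩ := Finset.card_eq_one.mp h1; exact h k hk)]
    simp [h]

lemma dualAdjMat_eq_sum_signMat : dualAdjMat D = ∑ k, signMat k := by
  simp only [dualAdjMat, signMat, ← diagonalAddMonoidHom_apply, ← map_sum]
  congr 1
  ext y
  rw [Finset.sum_apply, wt, Finset.natCast_card_filter, Finset.mul_sum,
    show (D : ℂ) = ∑ _k : Fin D, 1 by simp, ← Finset.sum_sub_distrib]
  exact Finset.sum_congr rfl fun k _ => by cases y k <;> norm_num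

lemma flipMat_mul_self (k : Fin D) : flipMat k * flipMat k = 1 := by
  rw [flipMat, ← Matrix.permMatrix_mul, flipAt_mul_self, Matrix.permMatrix_one]

lemma commute_flipMat (j k : Fin D) : Commute (flipMat j) (flipMat k) := by
  rw [Commute, SemiconjBy, flipMat, flipMat, ← Matrix.permMatrix_mul, ← Matrix.permMatrix_mul,
    flipAt_mul_comm]

lemma signMat_mul_self (k : Fin D) : signMat k * signMat k = 1 := by
  rw [signMat, diagonal_mul_diagonal, ← diagonal_one]
  congr 1
  ext y
  cases y k <;> norm_num

lemma commute_signMat (j k : Fin D) : Commute (signMat j) (signMat k) :=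
  commute_diagonal _ _

lemma commute_flipMat_signMat {j k : Fin D} (hjk : j ≠ k) : Commute (flipMat j) (signMat k) := by
  rw [Commute, SemiconjBy, flipMat, signMat, Matrix.permMatrix_mul_diagonal]
  congr 3
  ext y
  simp [flipAt_apply, Ne.symm hjk]

lemma flipMat_mul_signMat_self (k : Fin D) :
    flipMat k * signMat k = -(signMat k * flipMat k) := by
  rw [flipMat, signMat, Matrix.permMatrix_mul_diagonal, ← neg_mul, diagonal_neg]
  congr 2
  ext y
  cases hy : y k <;> simp [flipAt_apply, hy]

theorem isPauliTriple_adjMat_dualAdjMat_imagAdjMat (D : ℕ) :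
    IsPauliTriple (adjMat D) (dualAdjMat D) (imagAdjMat D) := by
  rw [imagAdjMat, adjMat_eq_sum_flipMat, dualAdjMat_eq_sum_signMat]
  exact isPauliTriple_sum _ _ flipMat_mul_self signMat_mul_self flipMat_mul_signMat_self
    commute_flipMat commute_signMat fun j k => commute_flipMat_signMat

end Hypercube

theorem leonard_triple_on_irreducible_module_general (D : ℕ)
    (W : Submodule ℂ (Vtx D → ℂ)) (hW : IsIrredTMod D W) :
    ∃ (hA : ∀ w ∈ W, (adjMat D).mulVecLin w ∈ W)
      (hAs : ∀ w ∈ W, (dualAdjMat D).mulVecLin w ∈ W)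
      (hAe : ∀ w ∈ W, (imagAdjMat D).mulVecLin w ∈ W),
      IsLeonardTriple ((adjMat D).mulVecLin.restrict hA)
        ((dualAdjMat D).mulVecLin.restrict hAs)
        ((imagAdjMat D).mulVecLin.restrict hAe) := by
  obtain ⟨⟨hA, hAs⟩, hWne, hWirr⟩ := hW
  replace hA : W ∈ Module.End.invtSubmodule (adjMat D).mulVecLin := hA
  replace hAs : W ∈ Module.End.invtSubmodule (dualAdjMat D).mulVecLin := hAs
  have hP : IsPauliTriple (adjMat D).mulVecLin (dualAdjMat D).mulVecLin
      (imagAdjMat D).mulVecLin :=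
    (Hypercube.isPauliTriple_adjMat_dualAdjMat_imagAdjMat D).map Matrix.toLinAlgEquiv'.toAlgHom
  have hAe := hP.mem_invtSubmodule hA hAs
  have : Nontrivial W := Submodule.nontrivial_iff_ne_bot.mpr hWne
  exact ⟨hA, hAs, hAe, (hP.restrict hA hAs hAe).isLeonardTriple
    (jointlyIrreducible_restrict hA hAs fun U hUW hUA hUAs => hWirr U ⟨hUA, hUAs⟩ hUW)⟩

/-- For an irreducible `T`-module `W`, the matrices `A`, `A*`, `Aᵉ` each map
`W` into itself, and the triple of restrictions of `A`, `A*`, `Aᵉ` to `W` is a Leonard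
triple on `W`. -/
theorem leonard_triple_on_irreducible_module (D : ℕ) (hD : 0 < D)
    (W : Submodule ℂ (Vtx D → ℂ)) (hW : IsIrredTMod D W) :
    ∃ (hA : ∀ w ∈ W, (adjMat D).mulVecLin w ∈ W)
      (hAs : ∀ w ∈ W, (dualAdjMat D).mulVecLin w ∈ W)
      (hAe : ∀ w ∈ W, (imagAdjMat D).mulVecLin w ∈ W),
      IsLeonardTriple ((adjMat D).mulVecLin.restrict hA)
        ((dualAdjMat D).mulVecLin.restrict hAs)
        ((imagAdjMat D).mulVecLin.restrict hAe) :=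
  leonard_triple_on_irreducible_module_general D W hW
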